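/- arXiv:2008.10754 — 2 statements merged into one kernel-verified Lean document; each statement's English description precedes it below -/
import Mathlib

section
/- With Ω, b, and g as above, for every w ∈ L²(Ω) the function g(w) satisfies ∇×g(w) = 0 in the distributional sense, i.e., g(w) is curl-free. -/
open MeasureTheory Real
open scoped RealInnerProductSpace

noncomputable section

abbrev E2 := EuclideanSpace ℝ (Fin 2)

/-- Gradient of a scalar field on `ℝ²`. -/
def grad (f : E2 → ℝ) (x : E2) : E2 :=
  WithLp.toLp 2 (fun i => fderiv ℝ f x (EuclideanSpace.single i 1) : Fin 2 → ℝ)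

/-- Divergence of a planar vector field. -/
def divg (u : E2 → E2) (x : E2) : ℝ :=
  ∑ i : Fin 2, fderiv ℝ u x (EuclideanSpace.single i 1) i

/-- Scalar curl of a planar vector field: ∂ₓu₂ − ∂ᵧu₁. -/
def curl2 (u : E2 → E2) (x : E2) : ℝ :=
  fderiv ℝ u x (EuclideanSpace.single 0 1) 1 - fderiv ℝ u x (EuclideanSpace.single 1 1) 0

/-- L² norm of a scalar field on Ω. -/
def L2s (Ω : Set E2) (f : E2 → ℝ) : ℝ := Real.sqrt (∫ x in Ω, (f x)^2)

/-- L² norm of a vector field on Ω. -/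
def L2v (Ω : Set E2) (u : E2 → E2) : ℝ := Real.sqrt (∫ x in Ω, ‖u x‖^2)

/-- H¹ norm of a scalar field on Ω. -/
def H1s (Ω : Set E2) (f : E2 → ℝ) : ℝ :=
  Real.sqrt ((∫ x in Ω, (f x)^2) + ∫ x in Ω, ‖grad f x‖^2)

/-- H¹ norm of a vector field on Ω. -/
def H1v (Ω : Set E2) (u : E2 → E2) : ℝ :=
  Real.sqrt ((∫ x in Ω, ‖u x‖^2) + ∫ x in Ω, ‖fderiv ℝ u x‖^2)

/-- H^div norm of a vector field on Ω. -/
def HdivN (Ω : Set E2) (u : E2 → E2) : ℝ :=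
  Real.sqrt ((∫ x in Ω, ‖u x‖^2) + ∫ x in Ω, (divg u x)^2)

/-- Membership in H¹(Ω) (scalar). -/
def MemH1 (Ω : Set E2) (f : E2 → ℝ) : Prop :=
  MemLp f 2 (volume.restrict Ω) ∧ MemLp (grad f) 2 (volume.restrict Ω)

/-- Membership in H^div(Ω). -/
def MemHdiv (Ω : Set E2) (u : E2 → E2) : Prop :=
  MemLp u 2 (volume.restrict Ω) ∧ MemLp (divg u) 2 (volume.restrict Ω)

/-- Membership in H₀^div(Ω): vanishing normal trace, with `n` the outward unit normal. -/
def MemHdiv0 (Ω : Set E2) (n : E2 → E2) (u : E2 → E2) : Prop :=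
  MemHdiv Ω u ∧ ∀ x ∈ frontier Ω, ⟪u x, n x⟫ = 0

/-- The bilinear form b(u,v) = ∫_Ω u·v + (ε/6) ∫_Ω (∇·u)(∇·v). -/
def bForm (Ω : Set E2) (ε : ℝ) (u v : E2 → E2) : ℝ :=
  (∫ x in Ω, ⟪u x, v x⟫) + (ε / 6) * ∫ x in Ω, divg u x * divg v x

/-- the solution `g(w)` of `b(g(w),χ) = (w, ∇·χ)` is curl-free in
    the distributional sense: testing against any smooth compactly supported
    test function `φ` supported in Ω gives zero. -/
theorem statement2 (Ω : Set E2) (hΩo : IsOpen Ω) (hΩb : Bornology.IsBounded Ω)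
    (n : E2 → E2) (hn : ∀ x ∈ frontier Ω, ‖n x‖ = 1)
    (ε : ℝ) (hε : 0 < ε)
    (w : E2 → ℝ) (hw : MemLp w 2 (volume.restrict Ω))
    (g : E2 → E2) (hg : MemHdiv0 Ω n g)
    (hgdef : ∀ χ : E2 → E2, MemHdiv0 Ω n χ →
        bForm Ω ε g χ = ∫ x in Ω, w x * divg χ x) :
    ∀ φ : E2 → ℝ, ContDiff ℝ (⊤ : ℕ∞) φ → HasCompactSupport φ → tsupport φ ⊆ Ω →
      ∫ x in Ω, (g x 0 * grad φ x 1 - g x 1 * grad φ x 0) = 0 := by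
  intro φ hφ hφc hφs
  set e : Fin 2 → E2 := fun i => EuclideanSpace.single i (1:ℝ) with he
  set F : E2 → (E2 →L[ℝ] ℝ) := fderiv ℝ φ with hF
  have hφF : ContDiff ℝ (⊤ : ℕ∞) F := hφ.fderiv_right (by simp)
  have hFd : Differentiable ℝ F := hφF.differentiable (by simp)
  set χ : E2 → E2 := fun x => (F x (e 1)) • e 0 - (F x (e 0)) • e 1 with hχ
  -- fderiv of χ
  have key : ∀ x v, fderiv ℝ χ x v
      = (fderiv ℝ F x v (e 1)) • e 0 - (fderiv ℝ F x v (e 0)) • e 1 := by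
    intro x v
    have h0 : HasFDerivAt (fun y => F y (e 1)) ((fderiv ℝ F x).flip (e 1)) x := by
      have := ((hFd x).hasFDerivAt).clm_apply (hasFDerivAt_const (e 1) x)
      simpa using this
    have h1 : HasFDerivAt (fun y => F y (e 0)) ((fderiv ℝ F x).flip (e 0)) x := by
      have := ((hFd x).hasFDerivAt).clm_apply (hasFDerivAt_const (e 0) x)
      simpa using this
    have hd : HasFDerivAt χ
        ((((fderiv ℝ F x).flip (e 1)).smulRight (e 0))
          - (((fderiv ℝ F x).flip (e 0)).smulRight (e 1))) x :=
      (h0.smul_const (e 0)).sub (h1.smul_const (e 1))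
    rw [hd.fderiv]
    simp
  -- symmetry of second derivative
  have hsym : ∀ x, fderiv ℝ F x (e 0) (e 1) = fderiv ℝ F x (e 1) (e 0) := by
    intro x
    exact (hφ.contDiffAt.isSymmSndFDerivAt (by rw [minSmoothness_of_isRCLikeNormedField]; exact WithTop.coe_le_coe.mpr (le_top : (2:ℕ∞) ≤ ⊤))) (e 0) (e 1)
  have hdiv0 : ∀ x, divg χ x = 0 := by
    intro x
    have h0 := key x (e 0)
    have h1 := key x (e 1)
    simp only [divg, Fin.sum_univ_two]
    rw [show EuclideanSpace.single (0:Fin 2) (1:ℝ) = e 0 from rfl,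
        show EuclideanSpace.single (1:Fin 2) (1:ℝ) = e 1 from rfl, h0, h1]
    have e00 : e 0 0 = 1 := by simp [he, EuclideanSpace.single_apply]
    have e01 : e 0 1 = 0 := by simp [he, EuclideanSpace.single_apply]
    have e10 : e 1 0 = 0 := by simp [he, EuclideanSpace.single_apply]
    have e11 : e 1 1 = 1 := by simp [he, EuclideanSpace.single_apply]
    simp only [PiLp.sub_apply, PiLp.smul_apply, smul_eq_mul, e00, e01, e10, e11,
      mul_one, mul_zero, sub_zero, zero_sub]
    rw [hsym x]; ring
  -- χ has compact support and vanishes off tsupport φ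
  have hF0 : ∀ x, x ∉ tsupport φ → F x = 0 := by
    intro x hx
    by_contra h
    exact hx (support_fderiv_subset ℝ (Function.mem_support.mpr h))
  have hχ0 : ∀ x, x ∉ tsupport φ → χ x = 0 := by
    intro x hx
    simp [hχ, hF0 x hx]
  have hχcs : HasCompactSupport χ := HasCompactSupport.intro hφc hχ0
  have hχcont : Continuous χ :=
    (((hφF.continuous.clm_apply continuous_const)).smul continuous_const).sub
      (((hφF.continuous.clm_apply continuous_const)).smul continuous_const)
  have hmem : MemHdiv0 Ω n χ := by
    refine ⟨⟨hχcont.memLp_of_hasCompactSupport hχcs, ?_⟩, ?_⟩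
    · have : divg χ = fun _ => (0:ℝ) := funext hdiv0
      rw [this]
      exact MemLp.zero
    · intro x hx
      have hxΩ : x ∉ Ω := by
        rw [hΩo.frontier_eq] at hx
        exact hx.2
      have : χ x = 0 := hχ0 x (fun h => hxΩ (hφs h))
      simp [this]
  have hb := hgdef χ hmem
  simp only [bForm] at hb
  simp only [hdiv0, mul_zero, integral_zero, add_zero] at hb
  rw [← hb]
  congr 1
  ext x
  have e00 : e 0 0 = (1:ℝ) := by simp [he, EuclideanSpace.single_apply]
  have e01 : e 0 1 = (0:ℝ) := by simp [he, EuclideanSpace.single_apply]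
  have e10 : e 1 0 = (0:ℝ) := by simp [he, EuclideanSpace.single_apply]
  have e11 : e 1 1 = (1:ℝ) := by simp [he, EuclideanSpace.single_apply]
  simp only [PiLp.inner_apply, RCLike.inner_apply, conj_trivial, Fin.sum_univ_two,
    hχ, PiLp.sub_apply, PiLp.smul_apply, smul_eq_mul, e00, e01, e10, e11,
    mul_one, mul_zero, sub_zero, zero_sub, grad, PiLp.toLp_apply]
  ring
end
end

section
/- Let w ∈ H₀^{div}(Ω) with w·n = 0 on ∂Ω, and let R_h w be its Ritz projection into the finite element space with respect to the Nitsche form B, satisfying |||w − R_h w||| ≤ C h^{s−1}‖w‖_s for s ≥ 2. Then the normal trace of the projection satisfies ‖R_h w · n‖_{L²(∂Ω)} ≤ C h^{3/2} ‖w‖_{H²}, so R_h w·n → 0 as h → 0 even though R_h w need not satisfy the boundary condition exactly. -/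
open MeasureTheory Real
open scoped RealInnerProductSpace

noncomputable section

/-- The mesh-dependent norm
    |||u||| = (‖u‖_{div}² + h‖∇·u‖_{∂Ω}² + h⁻¹‖u·n‖_{∂Ω}²)^{1/2}. -/
def tripleNorm (Ω : Set E2) (σ : Measure E2) (n : E2 → E2) (h : ℝ)
    (u : E2 → E2) : ℝ :=
  Real.sqrt ((∫ x in Ω, ‖u x‖^2) + (∫ x in Ω, (divg u x)^2)
    + h * (∫ x, (divg u x)^2 ∂σ) + h⁻¹ * ∫ x, ⟪u x, n x⟫^2 ∂σ)

/-- The H² norm of a vector field on Ω. -/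
def H2v (Ω : Set E2) (u : E2 → E2) : ℝ :=
  Real.sqrt (∑ i ∈ Finset.range 3, ∫ x in Ω, ‖iteratedFDeriv ℝ i u x‖^2)

/-! Since `w · n = 0` on `∂Ω`, on the boundary `R_h w · n = -(w - R_h w) · n`. The boundary term of
`|||·|||` carries the weight `h⁻¹`, so `‖v · n‖_{∂Ω} ≤ h^{1/2} |||v|||` for every `v`; applied to
`v = w - R_h w` together with `|||w - R_h w||| ≤ C h ‖w‖₂` this gives the order `h^{3/2}`. -/

lemma tripleNorm_nonneg (Ω : Set E2) (σ : Measure E2) (n : E2 → E2) (h : ℝ) (u : E2 → E2) :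
    0 ≤ tripleNorm Ω σ n h u :=
  sqrt_nonneg _

lemma inv_mul_integral_inner_sq_le_sq_tripleNorm (Ω : Set E2) (σ : Measure E2) (n : E2 → E2)
    {h : ℝ} (hh : 0 ≤ h) (u : E2 → E2) :
    h⁻¹ * ∫ x, ⟪u x, n x⟫ ^ 2 ∂σ ≤ tripleNorm Ω σ n h u ^ 2 := by
  have hu : 0 ≤ ∫ x in Ω, ‖u x‖ ^ 2 := integral_nonneg fun _ => sq_nonneg _
  have hdiv : 0 ≤ ∫ x in Ω, divg u x ^ 2 := integral_nonneg fun _ => sq_nonneg _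
  have hdivσ : 0 ≤ h * ∫ x, divg u x ^ 2 ∂σ :=
    mul_nonneg hh (integral_nonneg fun _ => sq_nonneg _)
  have hnormal : 0 ≤ h⁻¹ * ∫ x, ⟪u x, n x⟫ ^ 2 ∂σ :=
    mul_nonneg (inv_nonneg.2 hh) (integral_nonneg fun _ => sq_nonneg _)
  rw [tripleNorm, sq_sqrt (by positivity)]
  linarith

lemma sqrt_integral_inner_sq_le_sqrt_mul_tripleNorm (Ω : Set E2) (σ : Measure E2)
    (n : E2 → E2) {h : ℝ} (hh : 0 < h) (u : E2 → E2) :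
    √(∫ x, ⟪u x, n x⟫ ^ 2 ∂σ) ≤ √h * tripleNorm Ω σ n h u := by
  have hA : ∫ x, ⟪u x, n x⟫ ^ 2 ∂σ ≤ h * tripleNorm Ω σ n h u ^ 2 := by
    calc ∫ x, ⟪u x, n x⟫ ^ 2 ∂σ = h * (h⁻¹ * ∫ x, ⟪u x, n x⟫ ^ 2 ∂σ) := by field_simp
      _ ≤ h * tripleNorm Ω σ n h u ^ 2 :=
        mul_le_mul_of_nonneg_left (inv_mul_integral_inner_sq_le_sq_tripleNorm Ω σ n hh.le u) hh.le
  calc √(∫ x, ⟪u x, n x⟫ ^ 2 ∂σ) ≤ √(h * tripleNorm Ω σ n h u ^ 2) := sqrt_le_sqrt hA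
    _ = √h * tripleNorm Ω σ n h u := by rw [sqrt_mul hh.le, sqrt_sq (tripleNorm_nonneg Ω σ n h u)]

lemma integral_inner_sq_eq_of_ae_inner_eq_zero {α E : Type*} [MeasurableSpace α]
    [NormedAddCommGroup E] [InnerProductSpace ℝ E] (μ : Measure α) {n w v : α → E}
    (hw : ∀ᵐ x ∂μ, ⟪w x, n x⟫ = 0) :
    ∫ x, ⟪v x, n x⟫ ^ 2 ∂μ = ∫ x, ⟪w x - v x, n x⟫ ^ 2 ∂μ :=
  integral_congr_ae <| hw.mono fun x hx => by simp [inner_sub_left, hx]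

theorem statement15_general (Ω : Set E2) (σ : Measure E2) (n : E2 → E2) (h : ℝ) (hh : 0 < h)
    (w Rhw : E2 → E2)
    (hbcσ : ∀ᵐ x ∂σ, ⟪w x, n x⟫ = 0)
    (C : ℝ)
    (hproj : tripleNorm Ω σ n h (fun x => w x - Rhw x) ≤ C * h * H2v Ω w) :
    Real.sqrt (∫ x, ⟪Rhw x, n x⟫^2 ∂σ) ≤ C * h ^ ((3:ℝ)/2) * H2v Ω w := by
  have h32 : h ^ ((3:ℝ)/2) = h * √h := by
    rw [sqrt_eq_rpow, ← rpow_one_add' hh.le (by norm_num)]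
    norm_num
  calc √(∫ x, ⟪Rhw x, n x⟫ ^ 2 ∂σ) = √(∫ x, ⟪w x - Rhw x, n x⟫ ^ 2 ∂σ) := by
        rw [integral_inner_sq_eq_of_ae_inner_eq_zero σ hbcσ]
    _ ≤ √h * tripleNorm Ω σ n h (fun x => w x - Rhw x) :=
        sqrt_integral_inner_sq_le_sqrt_mul_tripleNorm Ω σ n hh _
    _ ≤ √h * (C * h * H2v Ω w) := mul_le_mul_of_nonneg_left hproj (sqrt_nonneg h)
    _ = C * h ^ ((3:ℝ)/2) * H2v Ω w := by rw [h32]; ring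

/-- the normal trace of the Ritz projection of a field with
    vanishing normal trace is O(h^{3/2}): if w·n = 0 on ∂Ω and
    |||w − R_h w||| ≤ C h ‖w‖₂ (the case s = 2 of the projection estimate),
    then ‖R_h w · n‖_{L²(∂Ω)} ≤ C h^{3/2} ‖w‖₂. -/
theorem statement15 (Ω : Set E2) (hΩo : IsOpen Ω) (hΩb : Bornology.IsBounded Ω)
    (σ : Measure E2) (hσ : σ (frontier Ω)ᶜ = 0)
    (n : E2 → E2) (hn : ∀ x ∈ frontier Ω, ‖n x‖ = 1)
    (h : ℝ) (hh : 0 < h)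
    (w Rhw : E2 → E2)
    (hbc : ∀ x ∈ frontier Ω, ⟪w x, n x⟫ = 0)
    (hbcσ : ∀ᵐ x ∂σ, ⟪w x, n x⟫ = 0)
    (C : ℝ) (hC : 0 < C)
    (hproj : tripleNorm Ω σ n h (fun x => w x - Rhw x) ≤ C * h * H2v Ω w)
    (hint : Integrable (fun x => ⟪Rhw x - w x, n x⟫^2) σ) :
    Real.sqrt (∫ x, ⟪Rhw x, n x⟫^2 ∂σ) ≤ C * h ^ ((3:ℝ)/2) * H2v Ω w :=
  statement15_general Ω σ n h hh w Rhw hbcσ C hproj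
end
end
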